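/- For every object a of the Weyl groupoid of a Cartan scheme with finite root system and every i ∈ I, one has w_I σ_i^a w_I = σ_{τ_I^a(i)}^{τ(a)}, where w_I denotes longest elements (at appropriate objects) and τ_I^a is the permutation with w_I(α_j) = −α_{τ_I^a(j)}. Moreover, τ_I^a is an involution constant on connected components of the Cartan scheme. -/

import Mathlib

set_option linter.unusedSectionVars false

/-- A Cartan scheme `C = C(I, A, (ρ_i), (C^a))`. -/
structure CartanScheme (I A : Type) [Fintype I] [DecidableEq I] [Fintype A] [Nonempty A] where
  ρ : I → A → A
  c : A → I → I → ℤ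
  ρ_invol : ∀ i a, ρ i (ρ i a) = a
  c_diag : ∀ a i, c a i i = 2
  c_offdiag_nonpos : ∀ a i j, i ≠ j → c a i j ≤ 0
  c_zero_symm : ∀ a i j, c a i j = 0 → c a j i = 0
  c_rho : ∀ a i j, c (ρ i a) i j = c a i j

namespace CartanScheme

variable {I A : Type} [Fintype I] [DecidableEq I] [Fintype A] [Nonempty A] [DecidableEq A]
variable (C : CartanScheme I A)

/-- The simple reflection `σ_i^a` as a map `ℤ^I → ℤ^I`, `σ_i^a(α_j) = α_j - c^a_{ij} α_i`. -/
def sigma (a : A) (i : I) : (I → ℤ) → (I → ℤ) :=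
  fun v k => v k - (if k = i then ∑ j, C.c a i j * v j else 0)

/-- Target object of the word `[i_1, …, i_k]` read at source object `a`:
`ρ_{i_1} ⋯ ρ_{i_k}(a)`. -/
def wordTarget (a : A) : List I → A
  | [] => a
  | i :: l => C.ρ i (wordTarget a l)

/-- The map `σ_{i_1} ⋯ σ_{i_k}^a : ℤ^I → ℤ^I` determined by a word with source `a`. -/
def wordMap (a : A) : List I → ((I → ℤ) → (I → ℤ))
  | [] => id
  | i :: l => C.sigma (C.wordTarget a l) i ∘ wordMap a l

theorem wordTarget_append (a : A) (l₁ l₂ : List I) :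
    C.wordTarget a (l₁ ++ l₂) = C.wordTarget (C.wordTarget a l₂) l₁ := by
  induction l₁ with
  | nil => rfl
  | cons i l ih => simp [wordTarget, ih]

theorem wordMap_append (a : A) (l₁ l₂ : List I) :
    C.wordMap a (l₁ ++ l₂) = C.wordMap (C.wordTarget a l₂) l₁ ∘ C.wordMap a l₂ := by
  induction l₁ with
  | nil => rfl
  | cons i l ih => simp [wordMap, ih, wordTarget_append, Function.comp_assoc]

/-- A morphism of the Weyl groupoid `W(C)`: a source object, a target object, and a map
`ℤ^I → ℤ^I` which is a composition of simple reflections along some word. -/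
@[ext]
structure Mor where
  src : A
  tgt : A
  toFun : (I → ℤ) → (I → ℤ)
  spec : ∃ l : List I, C.wordTarget src l = tgt ∧ C.wordMap src l = toFun

variable {C}

/-- A word realizes a morphism. -/
def Realizes (w : Mor C) (l : List I) : Prop :=
  C.wordTarget w.src l = w.tgt ∧ C.wordMap w.src l = w.toFun

variable (C)

/-- The identity morphism `id^a`. -/
def idMor (a : A) : Mor C := ⟨a, a, id, ⟨[], rfl, rfl⟩⟩

/-- The generator `σ_i^a ∈ Hom(a, ρ_i(a))`. -/
def genMor (i : I) (a : A) : Mor C :=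
  ⟨a, C.ρ i a, C.sigma a i, ⟨[i], rfl, Function.comp_id _⟩⟩

/-- The simple reflection with target `a`, i.e. `id^a σ_i = σ_i^{ρ_i(a)} ∈ Hom(ρ_i(a), a)`. -/
def sgen (a : A) (i : I) : Mor C :=
  { src := C.ρ i a, tgt := a, toFun := C.sigma (C.ρ i a) i,
    spec := ⟨[i], by simp [wordTarget, C.ρ_invol], Function.comp_id _⟩ }

variable {C}

/-- Composition `u ∘ v` (with `v` applied first); junk value `u` if not composable. -/
def Mor.comp (u v : Mor C) : Mor C :=
  if h : v.tgt = u.src then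
    { src := v.src, tgt := u.tgt, toFun := u.toFun ∘ v.toFun,
      spec := by
        obtain ⟨lu, hu1, hu2⟩ := u.spec
        obtain ⟨lv, hv1, hv2⟩ := v.spec
        refine ⟨lu ++ lv, ?_, ?_⟩
        · rw [C.wordTarget_append, hv1, h, hu1]
        · rw [C.wordMap_append, hv1, h, hu2, hv2] }
  else u

/-- Length of a morphism: minimal length of a realizing word. -/
noncomputable def len (w : Mor C) : ℕ := sInf {k | ∃ l : List I, Realizes w l ∧ l.length = k}

/-- A reduced decomposition. -/
def IsReduced (w : Mor C) (l : List I) : Prop := Realizes w l ∧ l.length = len w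

/-- The (right) weak order: `u ≤_R uv` iff `ℓ(uv) = ℓ(u) + ℓ(v)`. -/
def weakLe (u w : Mor C) : Prop :=
  ∃ v : Mor C, v.tgt = u.src ∧ w = u.comp v ∧ len w = len u + len v

/-- Membership in the parabolic subgroupoid `W_J(C)`. -/
def InParabolic (J : Set I) (w : Mor C) : Prop :=
  ∃ l : List I, (∀ i ∈ l, i ∈ J) ∧ Realizes w l

/-- Length with respect to the generators `σ_j`, `j ∈ J`. -/
noncomputable def lenPar (J : Set I) (w : Mor C) : ℕ :=
  sInf {k | ∃ l : List I, (∀ i ∈ l, i ∈ J) ∧ Realizes w l ∧ l.length = k}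

/-- The set of letters occurring in some reduced decomposition of `w`;
by the theorem on reduced decompositions this is the set `J(w)`. -/
def Jset (w : Mor C) : Set I := {i | ∃ l : List I, IsReduced w l ∧ i ∈ l}

variable (C)

/-- The set of real roots at the object `a`. -/
def roots (a : A) : Set (I → ℤ) :=
  {α | ∃ (b : A) (l : List I) (j : I),
    C.wordTarget b l = a ∧ α = C.wordMap b l (Pi.single j 1)}

/-- The set of positive (real) roots at `a`. -/
def posRoots (a : A) : Set (I → ℤ) := {α ∈ C.roots a | ∀ i, 0 ≤ α i}

/-- `R^re(C)` is a finite root system of type `C`: axioms (R1), (R2), (R4) and finiteness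
((R3) holds automatically for real roots). -/
def IsFRS : Prop :=
  (∀ a : A, (C.roots a).Finite) ∧
  (∀ (a : A) (α : I → ℤ), α ∈ C.roots a → (∀ i, 0 ≤ α i) ∨ (∀ i, α i ≤ 0)) ∧
  (∀ (a : A) (i : I) (α : I → ℤ), α ∈ C.roots a → (∃ z : ℤ, α = z • Pi.single i 1) →
    α = Pi.single i 1 ∨ α = -Pi.single i 1) ∧
  (∀ (a : A) (i j : I), i ≠ j →
    (fun x => C.ρ i (C.ρ j x))^[(C.roots a ∩
      {α | ∃ m n : ℕ, α = (m : ℤ) • Pi.single i 1 + (n : ℤ) • Pi.single j 1}).ncard] a = a)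

variable {C}

/-- `I_L(w)`: the set of simple reflections with target `w.tgt` below `w` in weak order. -/
def IL (w : Mor C) : Set I := {i | weakLe (sgen C w.tgt i) w}

/-- `m` is the longest element of `Hom(-,a) ∩ W_J(C)`, i.e. `w_J` at the object `a`. -/
def IsLongestPar (a : A) (J : Set I) (m : Mor C) : Prop :=
  m.tgt = a ∧ InParabolic J m ∧
    ∀ x : Mor C, x.tgt = a → InParabolic J x → weakLe x m

/-- `m` is the longest element `w_I` of `Hom(-,a)`. -/
def IsLongestAt (a : A) (m : Mor C) : Prop :=
  m.tgt = a ∧ ∀ x : Mor C, x.tgt = a → weakLe x m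

/-- `z` is the meet of `x` and `y` in `(Hom(-,a), ≤_R)`. -/
def IsMeet (a : A) (x y z : Mor C) : Prop :=
  z.tgt = a ∧ weakLe z x ∧ weakLe z y ∧
    ∀ t : Mor C, t.tgt = a → weakLe t x → weakLe t y → weakLe t z

/-- `z` is the join of `x` and `y` in `(Hom(-,a), ≤_R)`. -/
def IsJoin (a : A) (x y z : Mor C) : Prop :=
  z.tgt = a ∧ weakLe x z ∧ weakLe y z ∧
    ∀ t : Mor C, t.tgt = a → weakLe x t → weakLe y t → weakLe z t

/-- The left coset `u W_J(C) ⊆ Hom(-, u.tgt)`. -/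
def leftCoset (u : Mor C) (J : Set I) : Set (Mor C) :=
  {x | ∃ v : Mor C, InParabolic J v ∧ v.tgt = u.src ∧ x = u.comp v}

end CartanScheme

/-! Write `w_a` for the longest element with target `a`. Since `σ_i ≤ w_a` and `σ_i ≤ w_{ρ_i a}`,
we get `w_a = σ_i v` and `w_{ρ_i a} = σ_i v'`, and then `v' ≤ w_a`, `v ≤ w_{ρ_i a}`. No longest
element has the form `σ_i w_b` (some simple root goes to `-α_i` under `w_b`, and `σ_i` makes it
positive), so both cofactors are nontrivial, and the length equations force them to be single
reflections: `σ_i w_a = w_{ρ_i a} σ_k` with equal lengths. Evaluating on simple roots gives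
`τ_a(k) = i` and `τ_{ρ_i a} = τ_a`, so `τ` and the length of `w` are constant along morphisms.
Hence the inverse of `w_a`, which has target `τ(a)` and the length of `w_a`, is `w_{τ(a)}`; this
makes `τ_a` an involution and turns `σ_i w_a = w_{ρ_i a} σ_k` into the conjugation formula. -/

namespace CartanScheme

section Vectors

variable {I : Type} [DecidableEq I]

lemma single_one_injective : Function.Injective fun j : I => (Pi.single j (1 : ℤ) : I → ℤ) := by
  intro j m h
  by_contra hne
  simpa [hne] using congrFun h j

lemma eq_of_single_sub_smul_single_eq_neg_single {p i m : I} {c : ℤ}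
    (h : (Pi.single p 1 - c • Pi.single i 1 : I → ℤ) = -Pi.single m 1) : p = i ∧ m = i := by
  have hp : p = i := by
    by_contra hne
    have hpp := congrFun h p
    rcases eq_or_ne p m with rfl | hpm <;> simp [*] at hpp
  subst hp
  refine ⟨rfl, ?_⟩
  by_contra hne
  simpa [Pi.single_apply, hne] using congrFun h m

lemma neg_single_one_ne_single_one (m i : I) : (-Pi.single m 1 : I → ℤ) ≠ Pi.single i 1 := by
  intro h
  have hi := congrFun h i
  by_cases hmi : m = i <;> simp [hmi] at hi

end Vectors

variable {I A : Type} [Fintype I] [DecidableEq I] [Fintype A] [Nonempty A] [DecidableEq A]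
variable (C : CartanScheme I A)

lemma isLinearMap_sigma (a : A) (i : I) : IsLinearMap ℤ (C.sigma a i) := by
  constructor
  · intro u v
    funext k
    simp only [sigma, Pi.add_apply, mul_add, Finset.sum_add_distrib]
    split_ifs <;> ring
  · intro z v
    funext k
    simp only [sigma, Pi.smul_apply, smul_eq_mul, mul_left_comm _ z, ← Finset.mul_sum]
    split_ifs <;> ring

lemma sigma_single (a : A) (i j : I) :
    C.sigma a i (Pi.single j 1) = Pi.single j 1 - C.c a i j • Pi.single i 1 := by
  funext k
  simp only [sigma, Pi.single_apply, mul_ite, mul_one, mul_zero, Pi.sub_apply, Pi.smul_apply,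
    smul_eq_mul]
  split_ifs <;> simp_all

lemma sigma_single_self (a : A) (i : I) : C.sigma a i (Pi.single i 1) = -Pi.single i 1 := by
  rw [sigma_single, C.c_diag, two_smul, sub_add_cancel_left]

lemma sigma_sigma (a : A) (i : I) (v : I → ℤ) : C.sigma a i (C.sigma a i v) = v := by
  funext k
  simp only [sigma, mul_sub, Finset.sum_sub_distrib, mul_ite, mul_zero, Finset.sum_ite_eq',
    Finset.mem_univ, if_true, C.c_diag]
  split_ifs <;> ring

lemma sigma_rho (a : A) (i : I) : C.sigma (C.ρ i a) i = C.sigma a i := by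
  funext v k
  simp [sigma, C.c_rho]

lemma isLinearMap_wordMap (b : A) (l : List I) : IsLinearMap ℤ (C.wordMap b l) := by
  induction l with
  | nil => exact LinearMap.id.isLinear
  | cons i l ih => exact (((C.isLinearMap_sigma _ i).mk' _).comp (ih.mk' _)).isLinear

lemma wordTarget_reverse (b : A) (l : List I) : C.wordTarget (C.wordTarget b l) l.reverse = b := by
  induction l with
  | nil => rfl
  | cons i l ih => simp [wordTarget, wordTarget_append, C.ρ_invol, ih]

lemma leftInverse_wordMap_reverse (b : A) (l : List I) :
    Function.LeftInverse (C.wordMap (C.wordTarget b l) l.reverse) (C.wordMap b l) := by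
  induction l with
  | nil => exact fun _ => rfl
  | cons i l ih =>
    intro v
    simp [wordMap, wordTarget, wordMap_append, C.ρ_invol, sigma_rho, sigma_sigma, ih v]

lemma rightInverse_wordMap_reverse (b : A) (l : List I) :
    Function.RightInverse (C.wordMap (C.wordTarget b l) l.reverse) (C.wordMap b l) := by
  have h := C.leftInverse_wordMap_reverse (C.wordTarget b l) l.reverse
  rwa [wordTarget_reverse, List.reverse_reverse] at h

lemma apply_wordTarget_eq_of_rho_invariant {β : Type*} {f : A → β}
    (hf : ∀ i a, f (C.ρ i a) = f a) (b : A) (l : List I) : f (C.wordTarget b l) = f b := by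
  induction l with
  | nil => rfl
  | cons i l ih => rw [wordTarget, hf, ih]

variable {C}

namespace Mor

lemma isLinearMap_toFun (w : Mor C) : IsLinearMap ℤ w.toFun := by
  obtain ⟨l, -, hl⟩ := w.spec
  exact hl ▸ C.isLinearMap_wordMap w.src l

lemma comp_src {u v : Mor C} (h : v.tgt = u.src) : (u.comp v).src = v.src := by
  simp only [comp, dif_pos h]

lemma comp_tgt {u v : Mor C} (h : v.tgt = u.src) : (u.comp v).tgt = u.tgt := by
  simp only [comp, dif_pos h]

lemma comp_toFun {u v : Mor C} (h : v.tgt = u.src) : (u.comp v).toFun = u.toFun ∘ v.toFun := by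
  simp only [comp, dif_pos h]

lemma apply_tgt_eq_apply_src {β : Type*} {f : A → β} (hf : ∀ i a, f (C.ρ i a) = f a)
    (w : Mor C) : f w.tgt = f w.src := by
  obtain ⟨l, hl, -⟩ := w.spec
  rw [← hl, C.apply_wordTarget_eq_of_rho_invariant hf]

def IsInverse (x w : Mor C) : Prop :=
  x.src = w.tgt ∧ x.tgt = w.src ∧
    Function.LeftInverse x.toFun w.toFun ∧ Function.RightInverse x.toFun w.toFun

lemma IsInverse.symm {x w : Mor C} (h : IsInverse x w) : IsInverse w x :=
  ⟨h.2.1.symm, h.1.symm, h.2.2.2, h.2.2.1⟩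

lemma exists_isInverse (w : Mor C) : ∃ x : Mor C, IsInverse x w := by
  obtain ⟨b, -, -, l, rfl, rfl⟩ := w
  exact ⟨⟨_, _, _, ⟨l.reverse, C.wordTarget_reverse b l, rfl⟩⟩, rfl, rfl,
    C.leftInverse_wordMap_reverse b l, C.rightInverse_wordMap_reverse b l⟩

lemma injective_toFun (w : Mor C) : Function.Injective w.toFun := by
  obtain ⟨x, -, -, hx, -⟩ := exists_isInverse w
  exact hx.injective

lemma IsInverse.realizes_reverse {x w : Mor C} (h : IsInverse x w) {l : List I}
    (hl : Realizes w l) : Realizes x l.reverse := by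
  obtain ⟨hsrc, htgt, -, hright⟩ := h
  obtain ⟨hlt, hlf⟩ := hl
  refine ⟨?_, ?_⟩
  · rw [hsrc, htgt, ← hlt, C.wordTarget_reverse]
  · have hleft := C.leftInverse_wordMap_reverse w.src l
    rw [hsrc, ← hlt, hleft.eq_rightInverse (hlf ▸ hright)]

end Mor

lemma exists_isReduced (w : Mor C) : ∃ l, IsReduced w l :=
  Nat.sInf_mem (s := {k | ∃ l : List I, Realizes w l ∧ l.length = k})
    (by obtain ⟨l, hl⟩ := w.spec; exact ⟨l.length, l, hl, rfl⟩)

lemma len_le_length {w : Mor C} {l : List I} (h : Realizes w l) : len w ≤ l.length :=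
  Nat.sInf_le ⟨l, h, rfl⟩

lemma Mor.IsInverse.len_le {x w : Mor C} (h : IsInverse x w) : len x ≤ len w := by
  obtain ⟨l, hl, hlen⟩ := exists_isReduced w
  simpa [hlen] using len_le_length (h.realizes_reverse hl)

lemma Mor.IsInverse.len_eq {x w : Mor C} (h : IsInverse x w) : len x = len w :=
  le_antisymm h.len_le h.symm.len_le

lemma len_eq_zero {w : Mor C} (h : len w = 0) : w.tgt = w.src ∧ w.toFun = id := by
  obtain ⟨l, ⟨hlt, hlf⟩, hlen⟩ := exists_isReduced w
  rw [h, List.length_eq_zero_iff] at hlen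
  subst hlen
  exact ⟨hlt.symm, hlf.symm⟩

lemma len_eq_one {w : Mor C} (h : len w = 1) :
    ∃ k, w.tgt = C.ρ k w.src ∧ w.toFun = C.sigma w.src k := by
  obtain ⟨l, ⟨hlt, hlf⟩, hlen⟩ := exists_isReduced w
  rw [h, List.length_eq_one_iff] at hlen
  obtain ⟨k, rfl⟩ := hlen
  exact ⟨k, hlt.symm, hlf.symm⟩

lemma Mor.comp_of_len_eq_zero {u v : Mor C} (h : v.tgt = u.src) (hv : len v = 0) :
    u.comp v = u := by
  obtain ⟨hvt, hvf⟩ := len_eq_zero hv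
  apply Mor.ext
  · rw [Mor.comp_src h, ← hvt, h]
  · rw [Mor.comp_tgt h]
  · rw [Mor.comp_toFun h, hvf, Function.comp_id]

lemma len_sgen (a : A) (i : I) : len (sgen C a i) = 1 := by
  have hle : len (sgen C a i) ≤ 1 := len_le_length (l := [i]) ⟨C.ρ_invol i a, Function.comp_id _⟩
  have hne : len (sgen C a i) ≠ 0 := by
    intro h0
    have hid := congrFun (len_eq_zero h0).2 (Pi.single i 1)
    simp only [sgen, sigma_rho, sigma_single_self, id] at hid
    exact neg_single_one_ne_single_one i i hid
  omega

section Longest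

variable {wL : A → Mor C} (hwL : ∀ b : A, IsLongestAt b (wL b)) {τI : A → I → I}
  (hτ : ∀ (b : A) (j : I), (wL b).toFun (Pi.single j 1) = -Pi.single (τI b j) 1)

include hτ in
lemma injective_tau (b : A) : Function.Injective (τI b) := by
  intro j m h
  apply single_one_injective
  apply (wL b).injective_toFun
  simp only [hτ, h]

include hτ in
lemma longest_toFun_ne_sigma_comp (b b' β : A) (i : I) :
    (wL b').toFun ≠ C.sigma β i ∘ (wL b).toFun := by
  intro h
  obtain ⟨j, hj⟩ := (Finite.injective_iff_surjective.mp (injective_tau hτ b)) i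
  have hαj := congrFun h (Pi.single j 1)
  rw [Function.comp_apply, hτ, hτ, hj, (C.isLinearMap_sigma β i).map_neg, sigma_single_self,
    neg_neg] at hαj
  exact neg_single_one_ne_single_one _ _ hαj

include hwL in
lemma exists_longest_eq_sgen_comp (a : A) (i : I) :
    ∃ v : Mor C, v.src = (wL a).src ∧ v.tgt = C.ρ i a ∧
      v.toFun = C.sigma a i ∘ (wL a).toFun ∧ len (wL a) = len v + 1 := by
  obtain ⟨v, hvt, hw, hlen⟩ := (hwL a).2 (sgen C a i) rfl
  refine ⟨v, by rw [hw, Mor.comp_src hvt], hvt, ?_, by rw [hlen, len_sgen, add_comm]⟩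
  funext x
  rw [hw, Mor.comp_toFun hvt]
  simp only [sgen, sigma_rho, Function.comp_apply, sigma_sigma]

include hwL hτ in
lemma exists_sigma_comp_longest_eq (a : A) (i : I) :
    ∃ k, (wL (C.ρ i a)).src = C.ρ k (wL a).src ∧
      C.sigma a i ∘ (wL a).toFun = (wL (C.ρ i a)).toFun ∘ C.sigma (wL a).src k ∧
      len (wL (C.ρ i a)) = len (wL a) := by
  obtain ⟨v, -, hvt, hv, hvl⟩ := exists_longest_eq_sgen_comp hwL a i
  obtain ⟨v', hv's, hv't, hv', hv'l⟩ := exists_longest_eq_sgen_comp hwL (C.ρ i a) i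
  rw [C.ρ_invol] at hv't
  obtain ⟨v₁, h1t, h1, h1l⟩ := (hwL a).2 v' hv't
  obtain ⟨v₂, h2t, h2, h2l⟩ := (hwL (C.ρ i a)).2 v hvt
  have hv₁ : len v₁ ≠ 0 := fun h0 => longest_toFun_ne_sigma_comp hτ (C.ρ i a) a (C.ρ i a) i <| by
    rw [h1, Mor.comp_toFun h1t, (len_eq_zero h0).2, Function.comp_id, hv']
  have hv₂ : len v₂ ≠ 0 := fun h0 => longest_toFun_ne_sigma_comp hτ a (C.ρ i a) a i <| by
    rw [h2, Mor.comp_toFun h2t, (len_eq_zero h0).2, Function.comp_id, hv]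
  obtain ⟨k, hkt, hkf⟩ := len_eq_one (show len v₁ = 1 by omega)
  have hsrc : (wL a).src = v₁.src := by rw [h1, Mor.comp_src h1t]
  have hfun : (wL a).toFun = v'.toFun ∘ v₁.toFun := by rw [h1, Mor.comp_toFun h1t]
  refine ⟨k, by rw [← hv's, ← h1t, hkt, hsrc], ?_, by omega⟩
  funext x
  rw [hfun, hv', hkf, ← hsrc, sigma_rho]
  simp only [Function.comp_apply, sigma_sigma]

include hτ in
lemma tau_eq_of_sigma_comp_eq {a a' β b : A} {i k : I}
    (h : C.sigma β i ∘ (wL a).toFun = (wL a').toFun ∘ C.sigma b k) :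
    τI a k = i ∧ τI a' = τI a := by
  have hσ := C.isLinearMap_sigma β i
  have hw' := (wL a').isLinearMap_toFun
  have hk := congrFun h (Pi.single k 1)
  rw [Function.comp_apply, Function.comp_apply, hτ, sigma_single_self, hσ.map_neg, hw'.map_neg,
    hτ, neg_inj, sigma_single] at hk
  obtain ⟨hak, ha'k⟩ := eq_of_single_sub_smul_single_eq_neg_single hk
  refine ⟨hak, funext fun j => ?_⟩
  by_cases hjk : j = k
  · rw [hjk, hak, ha'k]
  have hne : τI a j ≠ i := hak ▸ (injective_tau hτ a).ne hjk
  have hj := congrFun (congrFun h (Pi.single j 1)) (τI a j)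
  rw [Function.comp_apply, Function.comp_apply, hτ, hσ.map_neg, sigma_single, sigma_single,
    hw'.map_sub, hw'.map_smul, hτ, hτ, ha'k] at hj
  simpa [Pi.single_apply, hne, eq_comm] using hj

include hwL hτ in
lemma tau_rho (a : A) (i : I) : τI (C.ρ i a) = τI a := by
  obtain ⟨k, -, h, -⟩ := exists_sigma_comp_longest_eq hwL hτ a i
  exact (tau_eq_of_sigma_comp_eq hτ h).2

include hwL hτ in
lemma tau_tgt_eq_tau_src (w : Mor C) : τI w.tgt = τI w.src :=
  w.apply_tgt_eq_apply_src fun i a => tau_rho hwL hτ a i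

include hwL hτ in
lemma len_longest_tgt_eq_len_longest_src (w : Mor C) : len (wL w.tgt) = len (wL w.src) :=
  w.apply_tgt_eq_apply_src (f := fun b => len (wL b)) fun i a =>
    (exists_sigma_comp_longest_eq hwL hτ a i).choose_spec.2.2

include hwL hτ in
lemma isInverse_longest_src_longest (a : A) : Mor.IsInverse (wL (wL a).src) (wL a) := by
  obtain ⟨x, hx⟩ := (wL a).exists_isInverse
  obtain ⟨v, hvt, hw, hlen⟩ := (hwL (wL a).src).2 x hx.2.1
  have hlen' := len_longest_tgt_eq_len_longest_src hwL hτ (wL a)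
  rw [(hwL a).1, ← hx.len_eq] at hlen'
  rw [hw, Mor.comp_of_len_eq_zero hvt (by omega)]
  exact hx

include hwL hτ in
lemma tau_src_longest_comp_tau (a : A) : τI (wL a).src ∘ τI a = id := by
  obtain ⟨-, -, hleft, -⟩ := isInverse_longest_src_longest hwL hτ a
  funext j
  have h := hleft (-Pi.single j 1)
  rw [(wL a).isLinearMap_toFun.map_neg, hτ, neg_neg, hτ, neg_inj] at h
  exact single_one_injective h

include hwL hτ in
lemma longest_comp_genMor_comp_longest (a : A) (i : I) :
    (wL (wL (C.ρ i a)).src).comp ((genMor C i a).comp (wL a))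
      = genMor C (τI a i) (wL a).src := by
  obtain ⟨k, hsrc, hconj, -⟩ := exists_sigma_comp_longest_eq hwL hτ a i
  have hk : k = τI a i := by
    have hinv := congrFun (tau_src_longest_comp_tau hwL hτ a) k
    rw [Function.comp_apply, (tau_eq_of_sigma_comp_eq hτ hconj).1,
      ← tau_tgt_eq_tau_src hwL hτ (wL a), (hwL a).1] at hinv
    exact hinv.symm
  subst hk
  obtain ⟨hs, ht, hleft, -⟩ := isInverse_longest_src_longest hwL hτ (C.ρ i a)
  have h1 : (wL a).tgt = (genMor C i a).src := (hwL a).1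
  have h2 : ((genMor C i a).comp (wL a)).tgt = (wL (wL (C.ρ i a)).src).src := by
    rw [Mor.comp_tgt h1, hs, (hwL _).1]
    rfl
  apply Mor.ext
  · rw [Mor.comp_src h2, Mor.comp_src h1]
    rfl
  · rw [Mor.comp_tgt h2, ht, hsrc]
    rfl
  · rw [Mor.comp_toFun h2, Mor.comp_toFun h1]
    change _ ∘ (C.sigma a i ∘ _) = C.sigma _ _
    rw [hconj, ← Function.comp_assoc, hleft.comp_eq_id, Function.id_comp]

end Longest

end CartanScheme

variable {I A : Type} [Fintype I] [DecidableEq I] [Fintype A] [Nonempty A] [DecidableEq A]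

open CartanScheme

theorem longest_conjugation_of_generator_general (C : CartanScheme I A)
    (wL : A → Mor C) (hwL : ∀ b : A, IsLongestAt b (wL b))
    (τI : A → I → I)
    (hτ : ∀ (b : A) (j : I), (wL b).toFun (Pi.single j 1) = -Pi.single (τI b j) 1) :
    (∀ (a : A) (i : I),
      (wL ((wL (C.ρ i a)).src)).comp ((genMor C i a).comp (wL a))
        = genMor C (τI a i) ((wL a).src)) ∧
    (∀ a : A, τI ((wL a).src) ∘ τI a = id) ∧
    (∀ a b : A, (∃ w : Mor C, w.src = b ∧ w.tgt = a) → τI a = τI b) :=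
  ⟨longest_comp_genMor_comp_longest hwL hτ, tau_src_longest_comp_tau hwL hτ,
    fun _ _ ⟨w, hsrc, htgt⟩ => hsrc ▸ htgt ▸ tau_tgt_eq_tau_src hwL hτ w⟩

/-- `w_I σ_i^a w_I = σ_{τ_I^a(i)}^{τ(a)}`, where `τ(b)` is the source of
the longest element at `b` and `τ_I^b` is the permutation with `w_I(α_j) = -α_{τ_I^b(j)}`;
moreover `τ_I^a` is an involution and is constant on connected components. -/
theorem longest_conjugation_of_generator (C : CartanScheme I A) (hC : C.IsFRS)
    (wL : A → Mor C) (hwL : ∀ b : A, IsLongestAt b (wL b))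
    (τI : A → I → I)
    (hτ : ∀ (b : A) (j : I), (wL b).toFun (Pi.single j 1) = -Pi.single (τI b j) 1) :
    (∀ (a : A) (i : I),
      (wL ((wL (C.ρ i a)).src)).comp ((genMor C i a).comp (wL a))
        = genMor C (τI a i) ((wL a).src)) ∧
    (∀ a : A, τI ((wL a).src) ∘ τI a = id) ∧
    (∀ a b : A, (∃ w : Mor C, w.src = b ∧ w.tgt = a) → τI a = τI b) :=
  longest_conjugation_of_generator_general C wL hwL τI hτ
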